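/- Let n ≥ 2 and m ∈ ℤ. If there exists a prime p ≠ 3 with v_p(m² + m + 1) = 1, then f_m^{(n)}(X) is irreducible over ℚ. -/

import Mathlib

open Polynomial

/-- g(i) = 1, -m, -m-1, -1, m, m+1 according as i = 0,1,2,3,4,5 (mod 6). -/
def gcoefZ (m : ℤ) (i : ℕ) : ℤ :=
  match i % 6 with
  | 0 => 1 | 1 => -m | 2 => -m - 1 | 3 => -1 | 4 => m | _ => m + 1

/-- f_m^{(n)}(X) = sum_{i=0}^n C(n,i) X^i g(n-i), with integer m. -/
noncomputable def fpolZ (m : ℤ) (n : ℕ) : ℤ[X] :=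
  ∑ i ∈ Finset.range (n + 1), C ((n.choose i : ℤ) * gcoefZ m (n - i)) * X ^ i

namespace Stmt18Aux

lemma gcoefZ_step (m : ℤ) (a : ℕ) :
    gcoefZ m (a + 2) = gcoefZ m (a + 1) - gcoefZ m a := by
  have h1 : (a + 1) % 6 = (a % 6 + 1) % 6 := by omega
  have h2 : (a + 2) % 6 = (a % 6 + 2) % 6 := by omega
  have h6 : a % 6 = 0 ∨ a % 6 = 1 ∨ a % 6 = 2 ∨ a % 6 = 3 ∨ a % 6 = 4 ∨ a % 6 = 5 := by omega
  rcases h6 with h | h | h | h | h | h <;> simp [gcoefZ, h1, h2, h] <;> ring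

/-- Two-parameter auxiliary sequence. -/
def H (m : ℤ) (s j : ℕ) : ℤ :=
  ∑ i ∈ Finset.range (j + 1), (j.choose i : ℤ) * m ^ i * gcoefZ m (j + s - i)

lemma H_step2 (m : ℤ) (s j : ℕ) : H m (s + 2) j = H m (s + 1) j - H m s j := by
  unfold H
  rw [← Finset.sum_sub_distrib]
  refine Finset.sum_congr rfl fun i hi => ?_
  have hij : i ≤ j := by
    have := Finset.mem_range.mp hi; omega
  have e2 : j + (s + 2) - i = (j + s - i) + 2 := by omega
  have e1 : j + (s + 1) - i = (j + s - i) + 1 := by omega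
  rw [e2, e1, gcoefZ_step]
  ring

lemma H_succ (m : ℤ) (s j : ℕ) : H m s (j + 1) = m * H m s j + H m (s + 1) j := by
  have key : H m s (j + 1)
      = (∑ i ∈ Finset.range (j + 1),
          ((j.choose i : ℤ) + (j.choose (i + 1) : ℤ)) * m ^ (i + 1) * gcoefZ m (j + s - i))
        + gcoefZ m (j + s + 1) := by
    rw [H, Finset.sum_range_succ']
    congr 1
    · refine Finset.sum_congr rfl fun i hi => ?_
      have e : j + 1 + s - (i + 1) = j + s - i := by omega
      have e2 : ((j + 1).choose (i + 1) : ℤ) = (j.choose i : ℤ) + (j.choose (i + 1) : ℤ) := by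
        rw [Nat.choose_succ_succ]; push_cast; ring
      rw [e, e2]
    · have e : j + 1 + s - 0 = j + s + 1 := by omega
      simp [e]
  rw [key]
  have split : (∑ i ∈ Finset.range (j + 1),
        ((j.choose i : ℤ) + (j.choose (i + 1) : ℤ)) * m ^ (i + 1) * gcoefZ m (j + s - i))
      = (∑ i ∈ Finset.range (j + 1), (j.choose i : ℤ) * m ^ (i + 1) * gcoefZ m (j + s - i))
        + ∑ i ∈ Finset.range (j + 1), (j.choose (i + 1) : ℤ) * m ^ (i + 1) * gcoefZ m (j + s - i) := by
    rw [← Finset.sum_add_distrib]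
    refine Finset.sum_congr rfl fun i _ => ?_
    ring
  have first : (∑ i ∈ Finset.range (j + 1), (j.choose i : ℤ) * m ^ (i + 1) * gcoefZ m (j + s - i))
      = m * H m s j := by
    rw [H, Finset.mul_sum]
    refine Finset.sum_congr rfl fun i _ => ?_
    ring
  have second : (∑ i ∈ Finset.range (j + 1),
        (j.choose (i + 1) : ℤ) * m ^ (i + 1) * gcoefZ m (j + s - i)) + gcoefZ m (j + s + 1)
      = H m (s + 1) j := by
    have drop : (∑ i ∈ Finset.range (j + 1),
          (j.choose (i + 1) : ℤ) * m ^ (i + 1) * gcoefZ m (j + s - i))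
        = ∑ i ∈ Finset.range j, (j.choose (i + 1) : ℤ) * m ^ (i + 1) * gcoefZ m (j + s - i) := by
      rw [Finset.sum_range_succ, Nat.choose_succ_self]
      simp
    rw [drop, H, Finset.sum_range_succ']
    congr 1
    · refine Finset.sum_congr rfl fun i hi => ?_
      have e : j + (s + 1) - (i + 1) = j + s - i := by omega
      rw [e]
    · have e : j + (s + 1) - 0 = j + s + 1 := by omega
      simp [e]
  rw [split, first, add_assoc, second]

/-- h m j = f_m^{(j)}(m), as an explicit sum. -/
def h (m : ℤ) (j : ℕ) : ℤ :=
  ∑ i ∈ Finset.range (j + 1), (j.choose i : ℤ) * m ^ i * gcoefZ m (j - i)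

lemma h_eq_H (m : ℤ) (j : ℕ) : h m j = H m 0 j := by
  unfold h H
  refine Finset.sum_congr rfl fun i _ => ?_
  norm_num

lemma h_zero (m : ℤ) : h m 0 = 1 := by
  simp [h, gcoefZ]

lemma h_one (m : ℤ) : h m 1 = 0 := by
  simp [h, Finset.sum_range_succ, gcoefZ]

lemma h_rec (m : ℤ) (j : ℕ) :
    h m (j + 2) = (2 * m + 1) * h m (j + 1) - (m ^ 2 + m + 1) * h m j := by
  have e1 : H m 0 (j + 1) = m * H m 0 j + H m 1 j := H_succ m 0 j
  have e2 : H m 0 (j + 2) = m * H m 0 (j + 1) + H m 1 (j + 1) := H_succ m 0 (j + 1)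
  have e3 : H m 1 (j + 1) = m * H m 1 j + H m 2 j := H_succ m 1 j
  have e4 : H m 2 j = H m 1 j - H m 0 j := H_step2 m 0 j
  rw [h_eq_H, h_eq_H, h_eq_H, e2, e3, e4, e1]
  ring

lemma fpol_coeff (m : ℤ) (n k : ℕ) (hk : k ≤ n) :
    (fpolZ m n).coeff k = (n.choose k : ℤ) * gcoefZ m (n - k) := by
  rw [fpolZ, finset_sum_coeff]
  simp only [coeff_C_mul, coeff_X_pow, mul_ite, mul_one, mul_zero]
  rw [Finset.sum_ite_eq (Finset.range (n + 1)) k]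
  simp [Nat.lt_succ_iff.mpr hk]

lemma fpol_natDegree (m : ℤ) (n : ℕ) : (fpolZ m n).natDegree = n := by
  refine le_antisymm ?_ (le_natDegree_of_ne_zero ?_)
  · refine Polynomial.natDegree_sum_le_of_forall_le _ _ fun i hi => ?_
    refine (Polynomial.natDegree_C_mul_le _ _).trans ?_
    simp only [natDegree_X_pow]
    exact Nat.lt_succ_iff.mp (Finset.mem_range.mp hi)
  · rw [fpol_coeff m n n le_rfl]
    simp [gcoefZ]

lemma fpol_monic (m : ℤ) (n : ℕ) : (fpolZ m n).Monic := by
  rw [Polynomial.Monic, Polynomial.leadingCoeff, fpol_natDegree, fpol_coeff m n n le_rfl]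
  simp [gcoefZ]

lemma taylor_fpol_coeff (m : ℤ) (n k : ℕ) (hk : k ≤ n) :
    ((taylor m) (fpolZ m n)).coeff k = (n.choose k : ℤ) * h m (n - k) := by
  rw [taylor_coeff, fpolZ]
  rw [map_sum]
  simp only [C_mul_X_pow_eq_monomial, hasseDeriv_monomial, eval_finset_sum, eval_monomial]
  have step1 : ∀ i ∈ Finset.range (n + 1),
      (i.choose k : ℤ) * ((n.choose i : ℤ) * gcoefZ m (n - i)) * m ^ (i - k)
        = (i.choose k : ℤ) * ((n.choose i : ℤ) * gcoefZ m (n - i)) * m ^ (i - k) := fun _ _ => rfl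
  rw [Finset.range_eq_Ico, ← Finset.sum_Ico_consecutive _ (Nat.zero_le k) (by omega : k ≤ n + 1)]
  have hz : (∑ i ∈ Finset.Ico 0 k,
      (i.choose k : ℤ) * ((n.choose i : ℤ) * gcoefZ m (n - i)) * m ^ (i - k)) = 0 := by
    refine Finset.sum_eq_zero fun i hi => ?_
    have : i < k := (Finset.mem_Ico.mp hi).2
    rw [Nat.choose_eq_zero_of_lt this]
    simp
  rw [hz, zero_add, Finset.sum_Ico_eq_sum_range]
  have hnk : n + 1 - k = (n - k) + 1 := by omega
  rw [hnk, h, Finset.mul_sum]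
  refine Finset.sum_congr rfl fun t ht => ?_
  have ht' : t ≤ n - k := Nat.lt_succ_iff.mp (Finset.mem_range.mp ht)
  have e1 : k + t - k = t := by omega
  have e2 : n - (k + t) = n - k - t := by omega
  have e3 : ((k + t).choose k : ℤ) * (n.choose (k + t) : ℤ)
      = (n.choose k : ℤ) * ((n - k).choose t : ℤ) := by
    have := Nat.choose_mul (n := n) (show k ≤ k + t by omega)
    have e4 : k + t - k = t := by omega
    rw [e4] at this
    rw [mul_comm]
    exact_mod_cast this
  rw [e1, e2]
  calc ((k + t).choose k : ℤ) * ((n.choose (k + t) : ℤ) * gcoefZ m (n - k - t)) * m ^ t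
      = (((k + t).choose k : ℤ) * (n.choose (k + t) : ℤ)) * gcoefZ m (n - k - t) * m ^ t := by ring
    _ = ((n.choose k : ℤ) * ((n - k).choose t : ℤ)) * gcoefZ m (n - k - t) * m ^ t := by rw [e3]
    _ = (n.choose k : ℤ) * (((n - k).choose t : ℤ) * m ^ t * gcoefZ m (n - k - t)) := by ring

end Stmt18Aux

theorem stmt18 (n : ℕ) (hn : 2 ≤ n) (m : ℤ)
    (h : ∃ p : ℕ, p.Prime ∧ p ≠ 3 ∧ padicValInt p (m ^ 2 + m + 1) = 1) :
    Irreducible ((fpolZ m n).map (Int.castRingHom ℚ)) := by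
  classical
  obtain ⟨p, hp, hp3, hval⟩ := h
  haveI : Fact p.Prime := ⟨hp⟩
  have hpZ : Prime (p : ℤ) := Int.prime_iff_natAbs_prime.mpr (by simpa using hp)
  have hp0 : (p : ℤ) ≠ 0 := by exact_mod_cast hp.ne_zero
  set N : ℤ := m ^ 2 + m + 1 with hNdef
  have hNpos : 0 < N := by nlinarith [sq_nonneg (2 * m + 1)]
  have hNabs : N.natAbs ≠ 0 := by
    intro h0
    have := Int.natAbs_eq_zero.mp h0
    omega
  have hvalN : padicValNat p N.natAbs = 1 := hval
  have hpN : (p : ℤ) ∣ N := by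
    have h1 : p ∣ N.natAbs := by
      have h2 := pow_padicValNat_dvd (p := p) (n := N.natAbs)
      rwa [hvalN, pow_one] at h2
    exact Int.natAbs_dvd_natAbs.mp (by simpa using h1)
  have hpsqN : ¬ (p : ℤ) ^ 2 ∣ N := by
    intro hd
    have h1 : ¬ p ^ (padicValNat p N.natAbs + 1) ∣ N.natAbs :=
      pow_succ_padicValNat_not_dvd hNabs
    rw [hvalN] at h1
    have h2 : p ^ 2 ∣ N.natAbs := by
      simpa [Int.natAbs_pow] using Int.natAbs_dvd_natAbs.mpr hd
    exact h1 (by rw [show 1 + 1 = 2 from rfl]; exact h2)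
  have hp2m1 : ¬ (p : ℤ) ∣ (2 * m + 1) := by
    intro hd
    have hsq : (p : ℤ) ∣ (2 * m + 1) ^ 2 := dvd_pow hd two_ne_zero
    have h3 : (p : ℤ) ∣ 3 := by
      have e : (3 : ℤ) = 4 * N - (2 * m + 1) ^ 2 := by rw [hNdef]; ring
      rw [e]
      exact dvd_sub (hpN.mul_left 4) hsq
    have : p ∣ 3 := by exact_mod_cast h3
    exact hp3 ((Nat.prime_dvd_prime_iff_eq hp (by norm_num)).mp this)
  -- the key two-step induction
  have key2 : ∀ k : ℕ,
      (∃ u : ℤ, Stmt18Aux.h m (k + 2) = N * u ∧ (p : ℤ) ∣ (u + (2 * m + 1) ^ k)) ∧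
      (∃ u : ℤ, Stmt18Aux.h m (k + 3) = N * u ∧ (p : ℤ) ∣ (u + (2 * m + 1) ^ (k + 1))) := by
    intro k
    induction k with
    | zero =>
      constructor
      · refine ⟨-1, ?_, by simp⟩
        rw [Stmt18Aux.h_rec m 0, Stmt18Aux.h_zero, Stmt18Aux.h_one]
        ring
      · refine ⟨-(2 * m + 1), ?_, ?_⟩
        · rw [Stmt18Aux.h_rec m 1, Stmt18Aux.h_rec m 0, Stmt18Aux.h_zero, Stmt18Aux.h_one]
          ring
        · have e0 : (-(2 * m + 1) + (2 * m + 1) ^ (0 + 1) : ℤ) = 0 := by ring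
          rw [e0]
          exact dvd_zero _
    | succ k ih =>
      obtain ⟨⟨u, hu, hu'⟩, ⟨v, hv, hv'⟩⟩ := ih
      refine ⟨⟨v, hv, hv'⟩, ⟨(2 * m + 1) * v - N * u, ?_, ?_⟩⟩
      · have hrec := Stmt18Aux.h_rec m (k + 2)
        rw [hv, hu] at hrec
        rw [show k + 1 + 3 = k + 2 + 2 from rfl, hrec]
        ring
      · have e : (2 * m + 1) * v - N * u + (2 * m + 1) ^ (k + 1 + 1)
            = (2 * m + 1) * (v + (2 * m + 1) ^ (k + 1)) - N * u := by ring
        rw [e]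
        exact dvd_sub (hv'.mul_left _) (hpN.mul_right u)
  have hdvd : ∀ j : ℕ, 1 ≤ j → (p : ℤ) ∣ Stmt18Aux.h m j := by
    intro j hj
    match j, hj with
    | 1, _ => simp [Stmt18Aux.h_one]
    | (k + 2), _ =>
      obtain ⟨u, hu, _⟩ := (key2 k).1
      rw [hu]
      exact hpN.mul_right u
  have hnotsq : ¬ (p : ℤ) ^ 2 ∣ Stmt18Aux.h m n := by
    obtain ⟨k, rfl⟩ : ∃ k, n = k + 2 := ⟨n - 2, by omega⟩
    obtain ⟨u, hu, hu'⟩ := (key2 k).1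
    have hpu : ¬ (p : ℤ) ∣ u := by
      intro hdu
      have h9 : (p : ℤ) ∣ u + (2 * m + 1) ^ k - u := dvd_sub hu' hdu
      have e9 : u + (2 * m + 1) ^ k - u = (2 * m + 1) ^ k := by ring
      rw [e9] at h9
      exact hp2m1 (hpZ.dvd_of_dvd_pow h9)
    intro hsq
    obtain ⟨w, hw⟩ := hpN
    have hpw : ¬ (p : ℤ) ∣ w := by
      intro hdw
      exact hpsqN (by rw [hw, pow_two]; exact mul_dvd_mul_left _ hdw)
    rw [hu, hw] at hsq
    obtain ⟨c, hc⟩ := hsq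
    have hcc : (p : ℤ) * (w * u) = (p : ℤ) * ((p : ℤ) * c) := by linear_combination hc
    have hwu : (p : ℤ) ∣ w * u := ⟨c, mul_left_cancel₀ hp0 hcc⟩
    rcases hpZ.dvd_mul.mp hwu with hcase | hcase
    · exact hpw hcase
    · exact hpu hcase
  -- Eisenstein for the shifted polynomial
  set f : ℤ[X] := fpolZ m n with hfdef
  set q : ℤ[X] := (taylor m) f with hqdef
  have hfdeg : f.natDegree = n := Stmt18Aux.fpol_natDegree m n
  have hqdeg : q.natDegree = n := by rw [hqdef, natDegree_taylor, hfdeg]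
  have hqcoeff : ∀ k : ℕ, k ≤ n → q.coeff k = (n.choose k : ℤ) * Stmt18Aux.h m (n - k) :=
    fun k hk => Stmt18Aux.taylor_fpol_coeff m n k hk
  have hqmonic : q.Monic := by
    rw [Polynomial.Monic, Polynomial.leadingCoeff, hqdeg, hqcoeff n le_rfl]
    simp [Stmt18Aux.h_zero]
  have hq0 : q ≠ 0 := hqmonic.ne_zero
  have hqdegree : q.degree = (n : WithBot ℕ) := by
    rw [Polynomial.degree_eq_natDegree hq0, hqdeg]
  have hirr : Irreducible q := by
    refine Polynomial.irreducible_of_eisenstein_criterion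
      (P := Ideal.span {(p : ℤ)}) ?_ ?_ ?_ ?_ ?_ ?_
    · exact (Ideal.span_singleton_prime hp0).mpr hpZ
    · rw [hqmonic.leadingCoeff, Ideal.mem_span_singleton]
      exact fun hd => hpZ.not_dvd_one hd
    · intro k hk
      rw [hqdegree] at hk
      have hkn : k < n := by exact_mod_cast hk
      rw [Ideal.mem_span_singleton, hqcoeff k (le_of_lt hkn)]
      exact (hdvd (n - k) (by omega)).mul_left _
    · rw [hqdegree]
      exact_mod_cast (by omega : 0 < n)
    · rw [Ideal.span_singleton_pow, Ideal.mem_span_singleton, hqcoeff 0 (by omega)]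
      simpa using hnotsq
    · exact hqmonic.isPrimitive
  have hfirr : Irreducible f := by
    have he : q = (algEquivAevalXAddC m) f := by
      rw [hqdef, taylor_apply, algEquivAevalXAddC_apply, comp_eq_aeval]
    rw [he] at hirr
    exact (MulEquiv.irreducible_iff (algEquivAevalXAddC m)).mp hirr
  have hfmonic : f.Monic := Stmt18Aux.fpol_monic m n
  have := (hfmonic.irreducible_iff_irreducible_map_fraction_map (K := ℚ)).mp hfirr
  rwa [show algebraMap ℤ ℚ = Int.castRingHom ℚ from rfl] at this
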